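/- arXiv:math/9909032 — 2 statements merged into one kernel-verified Lean document; each statement's English description precedes it below -/
import Mathlib

section
/- Let n ≥ 2, δ > 0, and let T and T' be the closed δ-neighbourhoods in ℝⁿ of the line segments l(x,v) = {(x+vt, t) : t ∈ [0,1]} and l(x',v') respectively, where x,v,x',v' ∈ ℝ^{n-1} with |v|,|v'| ≤ 1. If |v - v'| ≥ τ > 0, then the Lebesgue measure of T ∩ T' is at most C(n) δⁿ / τ for some constant C(n) depending only on n. -/
open Metric MeasureTheory

/-!
A point `(y, s)` of the tube around `l(x,v)` lies within `2δ` of the point `x + s v` of the line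
at the same height `s`. So at height `s` both tubes are contained in `2δ`-balls, and they can only
meet where `‖(x - x') + s (v - v')‖ ≤ 4δ`; this confines `s` to a set of diameter
`8δ / |v - v'|`. Fubini then bounds the intersection by `(2δ)^{n-1} · 8δ/τ` up to the volume of
the unit ball.
-/

/-- The line segment `l(x,v) = {(x+tv, t) : t ∈ [0,1]}` in `ℝ^{n-1} × ℝ`. -/
def seg (n : ℕ) (x v : EuclideanSpace ℝ (Fin n)) :
    Set ((EuclideanSpace ℝ (Fin n)) × ℝ) :=
  {p | ∃ t ∈ Set.Icc (0 : ℝ) 1, p = (x + t • v, t)}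

lemma isCompact_seg (n : ℕ) (x v : EuclideanSpace ℝ (Fin n)) : IsCompact (seg n x v) := by
  have : seg n x v = (fun t : ℝ => (x + t • v, t)) '' Set.Icc 0 1 := by
    ext p
    simp only [seg, Set.mem_ofPred_eq, Set.mem_image, eq_comm]
  rw [this]
  exact isCompact_Icc.image (by fun_prop)

lemma norm_sub_le_of_mem_cthickening_seg {n : ℕ} {δ : ℝ} (hδ : 0 ≤ δ)
    {x v : EuclideanSpace ℝ (Fin n)} {p : EuclideanSpace ℝ (Fin n) × ℝ}
    (hp : p ∈ cthickening δ (seg n x v)) :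
    ‖p.1 - (x + p.2 • v)‖ ≤ (1 + ‖v‖) * δ := by
  rw [(isCompact_seg n x v).cthickening_eq_biUnion_closedBall hδ] at hp
  obtain ⟨_, ⟨t, -, rfl⟩, hpq⟩ := Set.mem_iUnion₂.mp hp
  rw [mem_closedBall, Prod.dist_eq, max_le_iff, dist_eq_norm, Real.dist_eq] at hpq
  calc ‖p.1 - (x + p.2 • v)‖ = ‖(p.1 - (x + t • v)) - (p.2 - t) • v‖ := by
        congr 1; module
    _ ≤ ‖p.1 - (x + t • v)‖ + |p.2 - t| * ‖v‖ := by
        rw [← Real.norm_eq_abs, ← norm_smul]; exact norm_sub_le _ _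
    _ ≤ δ + δ * ‖v‖ := by gcongr; exacts [hpq.1, hpq.2]
    _ = (1 + ‖v‖) * δ := by ring

lemma norm_sub_le_two_mul_of_mem_cthickening_seg {n : ℕ} {δ : ℝ} (hδ : 0 ≤ δ)
    {x v : EuclideanSpace ℝ (Fin n)} (hv : ‖v‖ ≤ 1) {p : EuclideanSpace ℝ (Fin n) × ℝ}
    (hp : p ∈ cthickening δ (seg n x v)) :
    ‖p.1 - (x + p.2 • v)‖ ≤ 2 * δ :=
  (norm_sub_le_of_mem_cthickening_seg hδ hp).trans (by nlinarith)

lemma volume_slice_cthickening_seg_le {n : ℕ} {δ : ℝ} (hδ : 0 ≤ δ)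
    {x v : EuclideanSpace ℝ (Fin n)} (hv : ‖v‖ ≤ 1) (s : ℝ) :
    volume ((fun y => (y, s)) ⁻¹' cthickening δ (seg n x v)) ≤
      ENNReal.ofReal ((2 * δ) ^ n) * volume (ball (0 : EuclideanSpace ℝ (Fin n)) 1) := by
  calc volume ((fun y => (y, s)) ⁻¹' cthickening δ (seg n x v))
      ≤ volume (closedBall (x + s • v) (2 * δ)) := measure_mono fun y hy => by
        simpa [dist_eq_norm] using norm_sub_le_two_mul_of_mem_cthickening_seg hδ hv hy
    _ = ENNReal.ofReal ((2 * δ) ^ n) * volume (ball (0 : EuclideanSpace ℝ (Fin n)) 1) := by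
        rw [Measure.addHaar_closedBall _ _ (by positivity), finrank_euclideanSpace_fin]

lemma norm_sub_add_smul_sub_le_of_mem_cthickening_inter {n : ℕ} {δ : ℝ} (hδ : 0 ≤ δ)
    {x v x' v' : EuclideanSpace ℝ (Fin n)} (hv : ‖v‖ ≤ 1) (hv' : ‖v'‖ ≤ 1)
    {p : EuclideanSpace ℝ (Fin n) × ℝ}
    (hp : p ∈ cthickening δ (seg n x v) ∩ cthickening δ (seg n x' v')) :
    ‖(x - x') + p.2 • (v - v')‖ ≤ 4 * δ :=
  calc ‖(x - x') + p.2 • (v - v')‖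
      = ‖(p.1 - (x' + p.2 • v')) - (p.1 - (x + p.2 • v))‖ := by congr 1; module
    _ ≤ 2 * δ + 2 * δ := (norm_sub_le _ _).trans (add_le_add
        (norm_sub_le_two_mul_of_mem_cthickening_seg hδ hv' hp.2)
        (norm_sub_le_two_mul_of_mem_cthickening_seg hδ hv hp.1))
    _ = 4 * δ := by ring

lemma volume_setOf_norm_add_smul_le_le {F : Type*} [NormedAddCommGroup F] [NormedSpace ℝ F]
    (a : F) {w : F} (hw : w ≠ 0) (r : ℝ) :
    volume {s : ℝ | ‖a + s • w‖ ≤ r} ≤ ENNReal.ofReal (2 * r / ‖w‖) := by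
  refine (Real.volume_le_diam _).trans (ediam_le fun s hs s' hs' => ?_)
  rw [edist_dist, Real.dist_eq]
  refine ENNReal.ofReal_le_ofReal ((le_div_iff₀ (norm_pos_iff.mpr hw)).mpr ?_)
  calc |s - s'| * ‖w‖ = ‖(a + s • w) - (a + s' • w)‖ := by
        rw [← Real.norm_eq_abs, ← norm_smul, sub_smul]; congr 1; abel
    _ ≤ r + r := (norm_sub_le _ _).trans (add_le_add hs hs')
    _ = 2 * r := by ring

lemma prod_apply_le_of_slices {α β : Type*} [MeasurableSpace α] [MeasurableSpace β]
    {μ : Measure α} {ν : Measure β} [SFinite μ] [SFinite ν] {A : Set (α × β)}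
    (hA : MeasurableSet A) {S : Set β} (hS : MeasurableSet S) {m : ENNReal}
    (hslice : ∀ b, μ ((fun a => (a, b)) ⁻¹' A) ≤ m) (hAS : ∀ p ∈ A, p.2 ∈ S) :
    μ.prod ν A ≤ m * ν S := by
  rw [Measure.prod_apply_symm hA, ← lintegral_indicator_const hS]
  refine lintegral_mono fun b => ?_
  by_cases hb : b ∈ S
  · simpa [Set.indicator_of_mem hb] using hslice b
  · have : (fun a => (a, b)) ⁻¹' A = ∅ :=
      Set.eq_empty_of_forall_notMem fun a ha => hb (hAS (a, b) ha)
    simp [this]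

/-- If two tubes (δ-neighbourhoods of segments `l(x,v)`, `l(x',v')` with `|v|,|v'| ≤ 1`)
have directions separated by `τ`, then the measure of their intersection is at most
`C(n) δ^n / τ`. -/
theorem stmt2 (n : ℕ) (hn : 2 ≤ n) :
    ∃ C : ℝ, 0 < C ∧ ∀ (δ τ : ℝ), 0 < δ → 0 < τ →
      ∀ x v x' v' : EuclideanSpace ℝ (Fin (n - 1)),
        ‖v‖ ≤ 1 → ‖v'‖ ≤ 1 → τ ≤ ‖v - v'‖ →
        volume (cthickening δ (seg (n - 1) x v) ∩ cthickening δ (seg (n - 1) x' v'))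
          ≤ ENNReal.ofReal (C * δ ^ n / τ) := by
  set B := volume (ball (0 : EuclideanSpace ℝ (Fin (n - 1))) 1)
  have hB : B ≠ ⊤ := measure_ball_lt_top.ne
  refine ⟨8 * 2 ^ (n - 1) * B.toReal, ?_, fun δ τ hδ hτ x v x' v' hv hv' hτv => ?_⟩
  · exact mul_pos (by positivity) (ENNReal.toReal_pos (measure_ball_pos _ _ one_pos).ne' hB)
  set T := cthickening δ (seg (n - 1) x v) ∩ cthickening δ (seg (n - 1) x' v')
  set S := {s : ℝ | ‖(x - x') + s • (v - v')‖ ≤ 4 * δ}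
  have hT : MeasurableSet T := (isClosed_cthickening.inter isClosed_cthickening).measurableSet
  have hS : MeasurableSet S := (isClosed_le (by fun_prop) continuous_const).measurableSet
  have hvv' : v - v' ≠ 0 := norm_pos_iff.mp (hτ.trans_le hτv)
  have hδn : δ ^ n = δ ^ (n - 1) * δ := by rw [← pow_succ]; congr 1; omega
  calc volume T = volume.prod volume T := by rw [Measure.volume_eq_prod]
    _ ≤ ENNReal.ofReal ((2 * δ) ^ (n - 1)) * B * volume S :=
        prod_apply_le_of_slices hT hS
          (fun s => (measure_mono fun _ hy => hy.1).trans
            (volume_slice_cthickening_seg_le hδ.le hv s))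
          (fun _ hp => norm_sub_add_smul_sub_le_of_mem_cthickening_inter hδ.le hv hv' hp)
    _ ≤ ENNReal.ofReal ((2 * δ) ^ (n - 1)) * B *
          ENNReal.ofReal (2 * (4 * δ) / ‖v - v'‖) := by
        gcongr; exact volume_setOf_norm_add_smul_le_le _ hvv' _
    _ ≤ ENNReal.ofReal (8 * 2 ^ (n - 1) * B.toReal * δ ^ n / τ) := by
        nth_rw 1 [← ENNReal.ofReal_toReal hB]
        rw [← ENNReal.ofReal_mul (by positivity), ← ENNReal.ofReal_mul (by positivity)]
        refine ENNReal.ofReal_le_ofReal ?_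
        calc (2 * δ) ^ (n - 1) * B.toReal * (2 * (4 * δ) / ‖v - v'‖)
            = 2 ^ (n - 1) * δ ^ (n - 1) * B.toReal * (8 * δ / ‖v - v'‖) := by ring
          _ ≤ 2 ^ (n - 1) * δ ^ (n - 1) * B.toReal * (8 * δ / τ) := by gcongr
          _ = 8 * 2 ^ (n - 1) * B.toReal * δ ^ n / τ := by rw [hδn]; ring
end

section
/- Let S be the θ/2-neighbourhood of a 2-plane in ℝⁿ (a θ-slab), and let T be the δ-neighbourhood of a unit line segment l with δ ≤ θ. If the angle between l and the 2-plane is α ≥ θ, then |S ∩ T| ≤ C(n) δ^{n-1} θ / α. -/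
/-!
Let `K` be the direction of the plane and `Q` the orthogonal projection onto `Kᗮ`.
On the slab `‖Q (x - p₀)‖ ≤ θ / 2`, while along the line through `a` and `b` the vector
`Q (x - p₀)` moves at speed `‖Q (b - a)‖ ≥ sin α ≥ 2α/π`. So the part of the tube inside the
slab lies in the `δ`-neighbourhood of a sub-segment of length `O((θ + δ) / α) = O(θ / α)`,
which is covered by `O(θ / (α δ))` balls of radius `2δ`, each of volume `O(δⁿ)`.
-/

open Metric MeasureTheory RealInnerProductSpace Set AffineMap InnerProductGeometry Real

section Segment

variable {E : Type*} [NormedAddCommGroup E] [NormedSpace ℝ E]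

theorem exists_dist_lineMap_le_of_mem_cthickening_segment {a b x : E} {δ : ℝ} (hδ : 0 ≤ δ)
    (hx : x ∈ cthickening δ (segment ℝ a b)) :
    ∃ t ∈ Icc (0 : ℝ) 1, dist x (lineMap a b t) ≤ δ := by
  have hcpt : IsCompact (lineMap a b '' Icc (0 : ℝ) 1) :=
    isCompact_Icc.image lineMap_continuous
  rw [segment_eq_image_lineMap, hcpt.cthickening_eq_biUnion_closedBall hδ] at hx
  simpa using hx

theorem lineMap_mem_segment_lineMap {a b : E} {s t u : ℝ} (hst : s ≤ t) (htu : t ≤ u) :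
    lineMap a b t ∈ segment ℝ (lineMap a b s) (lineMap a b u) := by
  rw [← image_segment, segment_eq_Icc (hst.trans htu)]
  exact mem_image_of_mem _ ⟨hst, htu⟩

theorem exists_dist_lineMap_natCast_div_le (a b : E) {δ t : ℝ} (hδ : 0 < δ)
    (ht : t ∈ Icc (0 : ℝ) 1) :
    ∃ i ≤ ⌈dist a b / δ⌉₊,
      dist (lineMap a b t) (lineMap a b ((i : ℝ) / ⌈dist a b / δ⌉₊)) ≤ δ := by
  set N := ⌈dist a b / δ⌉₊
  rcases Nat.eq_zero_or_pos N with hN | hN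
  · have hab : dist a b ≤ 0 := by simpa using (div_le_iff₀ hδ).1 (Nat.ceil_eq_zero.1 hN)
    exact ⟨0, hN.ge, by simp [dist_le_zero.1 hab, hδ.le]⟩
  have hN' : (0 : ℝ) < N := by exact_mod_cast hN
  set i := ⌊t * N⌋₊
  have hi : (i : ℝ) ≤ t * N := Nat.floor_le (mul_nonneg ht.1 hN'.le)
  have hi' : t * N < i + 1 := Nat.lt_floor_add_one _
  have hab : dist a b ≤ N * δ := (div_le_iff₀ hδ).1 (Nat.le_ceil _)
  refine ⟨i, Nat.floor_le_of_le (by nlinarith [ht.2]), ?_⟩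
  have hti : t - i / N = (t * N - i) / N := by field_simp
  rw [dist_lineMap_lineMap, Real.dist_eq, hti, abs_of_nonneg (by positivity [sub_nonneg.2 hi])]
  calc (t * N - i) / N * dist a b ≤ 1 / N * (N * δ) := by gcongr; linarith
    _ = δ := by field_simp

end Segment

section Volume

variable {E : Type*} [NormedAddCommGroup E] [NormedSpace ℝ E] [FiniteDimensional ℝ E]
  [MeasurableSpace E] [BorelSpace E] (μ : Measure E) [μ.IsAddHaarMeasure]

open Module in
theorem addHaar_cthickening_segment_le (a b : E) {δ : ℝ} (hδ : 0 < δ) :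
    μ (cthickening δ (segment ℝ a b)) ≤
      ENNReal.ofReal ((dist a b / δ + 2) * (2 * δ) ^ finrank ℝ E) * μ (ball 0 1) := by
  set N := ⌈dist a b / δ⌉₊
  have hcover : cthickening δ (segment ℝ a b) ⊆
      ⋃ i ∈ Finset.range (N + 1), closedBall (lineMap a b ((i : ℝ) / N)) (2 * δ) := by
    intro x hx
    obtain ⟨t, ht, hxt⟩ := exists_dist_lineMap_le_of_mem_cthickening_segment hδ.le hx
    obtain ⟨i, hi, hti⟩ := exists_dist_lineMap_natCast_div_le a b hδ ht
    refine mem_biUnion (Finset.mem_range_succ_iff.2 hi) (mem_closedBall.2 ?_)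
    linarith [dist_triangle x (lineMap a b t) (lineMap a b ((i : ℝ) / N))]
  have hN : ((N + 1 : ℕ) : ENNReal) ≤ ENNReal.ofReal (dist a b / δ + 2) := by
    rw [← ENNReal.ofReal_natCast]
    refine ENNReal.ofReal_le_ofReal ?_
    push_cast
    linarith [Nat.ceil_lt_add_one (div_nonneg (dist_nonneg (x := a) (y := b)) hδ.le)]
  calc μ (cthickening δ (segment ℝ a b))
      ≤ ∑ i ∈ Finset.range (N + 1), μ (closedBall (lineMap a b ((i : ℝ) / N)) (2 * δ)) :=
        (measure_mono hcover).trans (measure_biUnion_finset_le _ _)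
    _ = (N + 1 : ℕ) * (ENNReal.ofReal ((2 * δ) ^ finrank ℝ E) * μ (ball 0 1)) := by
        simp only [μ.addHaar_closedBall (E := E) _ (by positivity : 0 ≤ 2 * δ), Finset.sum_const,
          Finset.card_range, nsmul_eq_mul]
    _ ≤ ENNReal.ofReal (dist a b / δ + 2) *
          (ENNReal.ofReal ((2 * δ) ^ finrank ℝ E) * μ (ball 0 1)) := by gcongr
    _ = _ := by rw [ENNReal.ofReal_mul (by positivity), mul_assoc]

end Volume

section Projection

variable {E : Type*} [NormedAddCommGroup E] [InnerProductSpace ℝ E]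
  (K : Submodule ℝ E) [K.HasOrthogonalProjection]

theorem norm_starProjection_orthogonal_le_of_mem_cthickening {A : Set E} {p x : E} {r : ℝ}
    (hA : ∀ y ∈ A, y - p ∈ K) (hr : 0 ≤ r) (hx : x ∈ cthickening r A) :
    ‖Kᗮ.starProjection (x - p)‖ ≤ r := by
  have hle : ENNReal.ofReal ‖Kᗮ.starProjection (x - p)‖ ≤ infEDist x A := by
    refine le_infEDist.2 fun y hy ↦ ?_
    have hxy : x - p = (x - y) + (y - p) := by abel
    rw [edist_dist, hxy, map_add, K.starProjection_orthogonal_apply_eq_zero (hA y hy), add_zero,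
      dist_eq_norm]
    exact ENNReal.ofReal_le_ofReal (Kᗮ.norm_starProjection_apply_le _)
  exact (ENNReal.ofReal_le_ofReal_iff hr).1 (hle.trans hx)

theorem norm_starProjection_le_cos_mul_norm {u : E} {α : ℝ} (hα₀ : 0 ≤ α)
    (hα : α ≤ π / 2) (hangle : ∀ w ∈ K, w ≠ 0 → α ≤ angle u w) :
    ‖K.starProjection u‖ ≤ cos α * ‖u‖ := by
  set p := K.starProjection u
  by_cases hp : p = 0
  · rw [hp, norm_zero]
    exact mul_nonneg (cos_nonneg_of_mem_Icc ⟨by linarith [pi_pos], hα⟩) (norm_nonneg u)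
  have hu : u ≠ 0 := by rintro rfl; simp [p] at hp
  have hinner : ⟪u, p⟫ = ‖p‖ ^ 2 := by
    have := Submodule.starProjection_inner_eq_zero (K := K) u p (K.starProjection_apply_mem u)
    rw [inner_sub_left, sub_eq_zero] at this
    rw [this, real_inner_self_eq_norm_sq]
  have hcos : cos (angle u p) ≤ cos α := cos_le_cos_of_nonneg_of_le_pi hα₀ (angle_le_pi u p)
    (hangle p (K.starProjection_apply_mem u) hp)
  rw [cos_angle, hinner, div_le_iff₀ (by positivity)] at hcos
  have : 0 < ‖p‖ := norm_pos_iff.2 hp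
  nlinarith

theorem sin_mul_norm_le_norm_starProjection_orthogonal {u : E} {α : ℝ} (hα₀ : 0 ≤ α)
    (hα : α ≤ π / 2) (hangle : ∀ w ∈ K, w ≠ 0 → α ≤ angle u w) :
    sin α * ‖u‖ ≤ ‖Kᗮ.starProjection u‖ := by
  have hpyth := K.norm_sq_eq_add_norm_sq_starProjection u
  have hcos : ‖K.starProjection u‖ ≤ cos α * ‖u‖ :=
    norm_starProjection_le_cos_mul_norm K hα₀ hα hangle
  refine le_of_pow_le_pow_left₀ two_ne_zero (norm_nonneg _) ?_
  have := pow_le_pow_left₀ (norm_nonneg _) hcos 2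
  nlinarith [sin_sq_add_cos_sq α]

theorem abs_sub_mul_norm_starProjection_orthogonal_le {A : Set E} {p a b : E} {r s t : ℝ}
    (hA : ∀ y ∈ A, y - p ∈ K) (hr : 0 ≤ r) (hs : lineMap a b s ∈ cthickening r A)
    (ht : lineMap a b t ∈ cthickening r A) :
    |s - t| * ‖Kᗮ.starProjection (b - a)‖ ≤ 2 * r := by
  have hdiff : Kᗮ.starProjection (lineMap a b s - p) - Kᗮ.starProjection (lineMap a b t - p) =
      (s - t) • Kᗮ.starProjection (b - a) := by
    rw [← map_sub, ← map_smul, lineMap_apply_module, lineMap_apply_module]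
    congr 1
    module
  calc |s - t| * ‖Kᗮ.starProjection (b - a)‖
      = ‖Kᗮ.starProjection (lineMap a b s - p) - Kᗮ.starProjection (lineMap a b t - p)‖ := by
        rw [hdiff, norm_smul, Real.norm_eq_abs]
    _ ≤ r + r := (norm_sub_le _ _).trans <| add_le_add
        (norm_starProjection_orthogonal_le_of_mem_cthickening K hA hr hs)
        (norm_starProjection_orthogonal_le_of_mem_cthickening K hA hr ht)
    _ = 2 * r := by ring

theorem exists_cthickening_inter_cthickening_segment_subset {A : Set E} {p a b : E} {r δ : ℝ}
    (hA : ∀ y ∈ A, y - p ∈ K) (hr : 0 ≤ r) (hδ : 0 ≤ δ)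
    (hq : 0 < ‖Kᗮ.starProjection (b - a)‖) :
    ∃ c : ℝ, cthickening r A ∩ cthickening δ (segment ℝ a b) ⊆
      cthickening δ (segment ℝ (lineMap a b c)
        (lineMap a b (c + 2 * (2 * (δ + r) / ‖Kᗮ.starProjection (b - a)‖)))) := by
  have hparam : ∀ x ∈ cthickening r A ∩ cthickening δ (segment ℝ a b), ∃ t : ℝ,
      dist x (lineMap a b t) ≤ δ ∧ lineMap a b t ∈ cthickening (δ + r) A := by
    rintro x ⟨hxA, hxab⟩
    obtain ⟨t, -, hxt⟩ := exists_dist_lineMap_le_of_mem_cthickening_segment hδ hxab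
    refine ⟨t, hxt, cthickening_cthickening_subset hδ hr A ?_⟩
    exact mem_cthickening_of_dist_le _ x δ _ hxA (by rwa [dist_comm])
  rcases (cthickening r A ∩ cthickening δ (segment ℝ a b)).eq_empty_or_nonempty
    with hempty | ⟨x₀, hx₀⟩
  · exact ⟨0, hempty ▸ empty_subset _⟩
  obtain ⟨t₀, -, ht₀⟩ := hparam x₀ hx₀
  refine ⟨t₀ - 2 * (δ + r) / ‖Kᗮ.starProjection (b - a)‖, fun x hx ↦ ?_⟩
  obtain ⟨t, hxt, ht⟩ := hparam x hx
  have htt₀ : |t - t₀| ≤ 2 * (δ + r) / ‖Kᗮ.starProjection (b - a)‖ := by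
    rw [le_div_iff₀ hq]
    exact abs_sub_mul_norm_starProjection_orthogonal_le K hA (by positivity) ht ht₀
  rw [abs_le] at htt₀
  exact mem_cthickening_of_dist_le x _ δ _
    (lineMap_mem_segment_lineMap (by linarith) (by linarith)) hxt

end Projection

theorem tube_cover_bound_le {n : ℕ} (hn : n ≠ 0) {δ θ α q : ℝ} (hδ : 0 < δ) (hδθ : δ ≤ θ)
    (hθα : θ ≤ α) (hαπ : α ≤ π / 2) (hq : 2 / π * α ≤ q) :
    (2 * (2 * (δ + θ / 2) / q) / δ + 2) * (2 * δ) ^ n ≤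
      2 ^ n * δ ^ (n - 1) * (4 * π * θ / α) := by
  have hθ : 0 < θ := hδ.trans_le hδθ
  have hα : 0 < α := hθ.trans_le hθα
  have hlen : 2 * (2 * (δ + θ / 2) / q) ≤ π * (3 * θ) / α :=
    calc 2 * (2 * (δ + θ / 2) / q) ≤ 2 * (2 * (δ + θ / 2) / (2 / π * α)) := by gcongr
      _ = π * (2 * δ + θ) / α := by field_simp
      _ ≤ π * (3 * θ) / α := by gcongr; linarith
  have hwidth : 2 * δ ≤ π * θ / α := by
    rw [le_div_iff₀ hα]; nlinarith [pi_pos]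
  calc (2 * (2 * (δ + θ / 2) / q) / δ + 2) * (2 * δ) ^ n
      = 2 ^ n * δ ^ (n - 1) * (2 * (2 * (δ + θ / 2) / q) + 2 * δ) := by
        obtain ⟨m, rfl⟩ := Nat.exists_eq_add_one_of_ne_zero hn
        rw [Nat.add_sub_cancel]
        field_simp
        ring
    _ ≤ 2 ^ n * δ ^ (n - 1) * (4 * π * θ / α) := by
        refine mul_le_mul_of_nonneg_left ?_ (by positivity)
        calc _ ≤ π * (3 * θ) / α + π * θ / α := add_le_add hlen hwidth
          _ = 4 * π * θ / α := by ring

/-- Slab-tube intersection estimate: if `S` is the `θ/2`-neighbourhood of a 2-plane and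
`T` the `δ`-neighbourhood of a unit segment making angle at least `α ≥ θ ≥ δ` with the
plane, then `|S ∩ T| ≤ C(n) δ^{n-1} θ / α`. -/
theorem stmt16 (n : ℕ) (hn : 3 ≤ n) :
    ∃ C : ℝ, 0 < C ∧
    ∀ (δ θ α : ℝ) (p₀ e₁ e₂ a b : EuclideanSpace ℝ (Fin n)),
      0 < δ → δ ≤ θ → θ ≤ α → α ≤ Real.pi / 2 →
      ‖e₁‖ = 1 → ‖e₂‖ = 1 → ⟪e₁, e₂⟫ = 0 →
      dist a b = 1 →
      (∀ w ∈ Submodule.span ℝ ({e₁, e₂} : Set (EuclideanSpace ℝ (Fin n))), w ≠ 0 →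
        α ≤ InnerProductGeometry.angle (b - a) w) →
      volume (cthickening (θ / 2) {y | ∃ s t : ℝ, y = p₀ + s • e₁ + t • e₂} ∩
          cthickening δ (segment ℝ a b))
        ≤ ENNReal.ofReal (C * δ ^ (n - 1) * θ / α) := by
  set B := volume (ball (0 : EuclideanSpace ℝ (Fin n)) 1)
  have hB : 0 < B.toReal :=
    ENNReal.toReal_pos (measure_ball_pos _ _ one_pos).ne' measure_ball_lt_top.ne
  refine ⟨2 ^ n * (4 * π) * B.toReal, by positivity, ?_⟩
  intro δ θ α p₀ e₁ e₂ a b hδ hδθ hθα hαπ _ _ _ hab hangle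
  have hθ : 0 < θ := hδ.trans_le hδθ
  have hα : 0 < α := hθ.trans_le hθα
  set K := Submodule.span ℝ ({e₁, e₂} : Set (EuclideanSpace ℝ (Fin n)))
  set q := ‖Kᗮ.starProjection (b - a)‖
  have hq : 2 / π * α ≤ q := by
    have := sin_mul_norm_le_norm_starProjection_orthogonal K hα.le hαπ hangle
    rw [← dist_eq_norm', hab, mul_one] at this
    exact (mul_le_sin hα.le hαπ).trans this
  have hslab : ∀ y ∈ {y | ∃ s t : ℝ, y = p₀ + s • e₁ + t • e₂}, y - p₀ ∈ K := by
    rintro _ ⟨s, t, rfl⟩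
    exact Submodule.mem_span_pair.2 ⟨s, t, by abel⟩
  obtain ⟨c, hc⟩ := exists_cthickening_inter_cthickening_segment_subset K hslab
    (by positivity : (0 : ℝ) ≤ θ / 2) hδ.le (lt_of_lt_of_le (by positivity) hq)
  refine (measure_mono hc).trans <| (addHaar_cthickening_segment_le volume _ _ hδ).trans ?_
  rw [finrank_euclideanSpace_fin, dist_lineMap_lineMap, hab, mul_one, dist_self_add_right,
    Real.norm_of_nonneg (by positivity),
    ← ENNReal.ofReal_toReal measure_ball_lt_top.ne, ← ENNReal.ofReal_mul (by positivity)]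
  refine ENNReal.ofReal_le_ofReal ?_
  calc _ ≤ 2 ^ n * δ ^ (n - 1) * (4 * π * θ / α) * B.toReal :=
        mul_le_mul_of_nonneg_right
          (tube_cover_bound_le (by omega : n ≠ 0) hδ hδθ hθα hαπ hq) hB.le
    _ = _ := by ring
end
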